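/- In the setting of the two reduction orders of R·S·T, prove that S_p + C_p - G_p - A_p ≥ 0 for all 1 ≤ p ≤ n. -/

import Mathlib

open Finset

/-- Partial sum `Φ_p = φ_1 + ⋯ + φ_p` of a multiplicity vector. -/
def PS (f : ℕ → ℕ) (p : ℕ) : ℕ := ∑ i ∈ Finset.Icc 1 p, f i

/-- Partial sums `X_p` of the bumped row in the vector insertion `W·Z = X·Y`:
`X_0 = X_1 = 0`, `X_{p+1} = min(Z_p, X_p + w_{p+1})`. -/
def capX (W Z : ℕ → ℕ) : ℕ → ℕ
  | 0 => 0
  | p + 1 => if p = 0 then 0 else min (PS Z p) (capX W Z p + W (p + 1))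

/-- Component `x_p = X_p - X_{p-1} = min(Z_{p-1} - X_{p-1}, w_p)` (with `x_1 = 0`). -/
def xcomp (W Z : ℕ → ℕ) (p : ℕ) : ℕ := capX W Z p - capX W Z (p - 1)

/-- Component `y_q = w_q + z_q - x_q`. -/
def ycomp (W Z : ℕ → ℕ) (q : ℕ) : ℕ := W q + Z q - xcomp W Z q

/-- `A` from `S·T = A·B`. -/
def rowA (S T : ℕ → ℕ) : ℕ → ℕ := xcomp S T
/-- `B` from `S·T = A·B`. -/
def rowB (S T : ℕ → ℕ) : ℕ → ℕ := ycomp S T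
/-- `C` from `R·A = C·D`. -/
def rowC (R S T : ℕ → ℕ) : ℕ → ℕ := xcomp R (rowA S T)
/-- `D` from `R·A = C·D`. -/
def rowD (R S T : ℕ → ℕ) : ℕ → ℕ := ycomp R (rowA S T)
/-- `E` from `D·B = E·F`. -/
def rowE (R S T : ℕ → ℕ) : ℕ → ℕ := xcomp (rowD R S T) (rowB S T)
/-- `F` from `D·B = E·F`. -/
def rowF (R S T : ℕ → ℕ) : ℕ → ℕ := ycomp (rowD R S T) (rowB S T)
/-- `G` from `R·S = G·H`. -/
def rowG (R S : ℕ → ℕ) : ℕ → ℕ := xcomp R S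
/-- `H` from `R·S = G·H`. -/
def rowH (R S : ℕ → ℕ) : ℕ → ℕ := ycomp R S
/-- `I` from `H·T = I·J`. -/
def rowI (R S T : ℕ → ℕ) : ℕ → ℕ := xcomp (rowH R S) T
/-- `J` from `H·T = I·J`. -/
def rowJ (R S T : ℕ → ℕ) : ℕ → ℕ := ycomp (rowH R S) T
/-- `K` from `G·I = K·L`. -/
def rowK (R S T : ℕ → ℕ) : ℕ → ℕ := xcomp (rowG R S) (rowI R S T)
/-- `L` from `G·I = K·L`. -/
def rowL (R S T : ℕ → ℕ) : ℕ → ℕ := ycomp (rowG R S) (rowI R S T)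

/-!
Write `G`, `A`, `C` for the partial sums of `rowG R S`, `rowA S T`, `rowC R S T`. For `p ≥ 1`
they obey `G_{p+1} = min(S_p, G_p + r_{p+1})`, `A_{p+1} = min(T_p, A_p + s_{p+1})` and
`C_{p+1} = min(A_p, C_p + r_{p+1})`, and `G_p + A_p ≤ S_p + C_p` follows by induction on `p`:
if `C_{p+1} = A_p`, use `G_{p+1} ≤ S_p` and `A_{p+1} ≤ A_p + s_{p+1}`; if
`C_{p+1} = C_p + r_{p+1}`, add `G_{p+1} ≤ G_p + r_{p+1}` and `A_{p+1} ≤ A_p + s_{p+1}` to the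
induction hypothesis.
-/

lemma PS_succ (f : ℕ → ℕ) (p : ℕ) : PS f (p + 1) = PS f p + f (p + 1) :=
  Finset.sum_Icc_succ_top (Nat.le_add_left 1 p) f

section capX

variable (W Z : ℕ → ℕ)

lemma capX_one : capX W Z 1 = 0 := rfl

lemma capX_add_two (p : ℕ) :
    capX W Z (p + 2) = min (PS Z (p + 1)) (capX W Z (p + 1) + W (p + 2)) := by
  simp [capX]

lemma capX_succ_le_PS (p : ℕ) : capX W Z (p + 1) ≤ PS Z p := by
  cases p with
  | zero => exact (capX_one W Z).le
  | succ p => exact (capX_add_two W Z p).trans_le (min_le_left _ _)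

lemma capX_le_capX_succ (p : ℕ) : capX W Z p ≤ capX W Z (p + 1) := by
  cases p with
  | zero => exact Nat.zero_le _
  | succ p =>
    rw [capX_add_two]
    exact le_min ((capX_succ_le_PS W Z p).trans (PS_succ Z p ▸ Nat.le_add_right _ _))
      (Nat.le_add_right _ _)

lemma PS_xcomp (p : ℕ) : PS (xcomp W Z) p = capX W Z p := by
  induction p with
  | zero => rfl
  | succ p ih =>
    rw [PS_succ, ih, xcomp, Nat.add_sub_cancel]
    exact Nat.add_sub_of_le (capX_le_capX_succ W Z p)

end capX

theorem capX_add_capX_le_PS_add_capX (W Z V : ℕ → ℕ) (p : ℕ) :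
    capX W Z p + capX Z V p ≤ PS Z p + capX W (xcomp Z V) p := by
  induction p with
  | zero => exact le_rfl
  | succ p ih =>
    cases p with
    | zero => exact Nat.zero_le _
    | succ p =>
      have hG := capX_add_two W Z p
      have hA := capX_add_two Z V p
      have hC := capX_add_two W (xcomp Z V) p
      have hS : PS Z (p + 2) = PS Z (p + 1) + Z (p + 2) := PS_succ Z (p + 1)
      rw [PS_xcomp] at hC
      show capX W Z (p + 2) + capX Z V (p + 2) ≤ PS Z (p + 2) + capX W (xcomp Z V) (p + 2)
      omega

/-- `S_p + C_p - G_p - A_p ≥ 0` for all `1 ≤ p ≤ n`. -/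
theorem S_add_C_ge_G_add_A (n : ℕ) (R S T : ℕ → ℕ) :
    ∀ p, 1 ≤ p → p ≤ n →
      PS (rowG R S) p + PS (rowA S T) p ≤ PS S p + PS (rowC R S T) p := by
  intro p _ _
  simpa only [rowG, rowA, rowC, PS_xcomp] using capX_add_capX_le_PS_add_capX R S T p
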